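/- arXiv:1806.02105 — 5 statements merged into one kernel-verified Lean document; each statement's English description precedes it below -/
import Mathlib

section
/- Let a, b, c ≥ 3 be integers such that at least one of a, b, c is not divisible by 4. Then for every prime p and every n ∈ ℤ_p (the ring of p-adic integers) there exist x, y, z ∈ ℤ_p such that ((a−2)x² − (a−4)x) + ((b−2)y² − (b−4)y) + ((c−2)z² − (c−4)z) = 2n. In particular, every natural number n is represented by P_a(x) + P_b(y) + P_c(z) over ℤ_p for every prime p. -/
/-!
By Hensel's lemma it suffices to solve the equation modulo `p` at a point where the derivative of
one of the three polynomials is a unit. For odd `p`, fix `x` modulo `p` where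
`2 (a - 2) x - (a - 4)` does not vanish (it is `4 - a` at `0` and `a` at `1`); the sum of the other
two polynomials takes every value in `𝔽_p`, being a sum of two quadratics in odd characteristic
unless it contains the linear `2 P_2(y) = 2 y`. For `p = 2` one polynomial with `4 ∤ m` suffices:
for odd `m`, `2 P_m(x) = 2 n` has the simple root `0` modulo `2`; for `m ≡ 2 (mod 4)` it halves to
`P_m(x) = n`, which has the simple root `n` modulo `2`.
-/

open Polynomial PadicInt

/-- `2 P_m(x)`, the division-free form of the generalized `m`-gonal polynomial. -/
def twicePolygonal {R : Type*} [CommRing R] (m x : R) : R :=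
  (m - 2) * x ^ 2 - (m - 4) * x

lemma exists_deriv_twicePolygonal_ne_zero {R : Type*} [CommRing R] (h4 : (4 : R) ≠ 0) (m : R) :
    ∃ x : R, 2 * (m - 2) * x - (m - 4) ≠ 0 := by
  by_contra! h
  exact h4 (by linear_combination h 0 + h 1)

theorem FiniteField.exists_twicePolygonal_add_twicePolygonal_eq {F : Type*} [Field F] [Fintype F]
    (hF : ringChar F ≠ 2) (m k s : F) :
    ∃ y z, twicePolygonal m y + twicePolygonal k z = s := by
  have h2 : (2 : F) ≠ 0 := Ring.two_ne_zero hF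
  by_cases hm : m - 2 = 0
  · obtain rfl : m = 2 := sub_eq_zero.1 hm
    exact ⟨s / 2, 0, by simp only [twicePolygonal]; field_simp; ring⟩
  by_cases hk : k - 2 = 0
  · obtain rfl : k = 2 := sub_eq_zero.1 hk
    exact ⟨0, s / 2, by simp only [twicePolygonal]; field_simp; ring⟩
  obtain ⟨y, z, h⟩ := FiniteField.exists_root_sum_quadratic
    (degree_quadratic (b := -(m - 4)) (c := 0) hm) (degree_quadratic (b := -(k - 4)) (c := -s) hk)
    (FiniteField.odd_card_of_char_ne_two hF)
  refine ⟨y, z, ?_⟩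
  simp only [eval_add, eval_mul, eval_pow, eval_C, eval_X] at h
  simp only [twicePolygonal]
  linear_combination h

namespace PadicInt

variable {p : ℕ} [Fact p.Prime]

lemma toZMod_eq_zero_iff_norm_lt_one (w : ℤ_[p]) : toZMod w = 0 ↔ ‖w‖ < 1 := by
  rw [← RingHom.mem_ker, ker_toZMod, IsLocalRing.mem_maximalIdeal, mem_nonunits]

lemma norm_eq_one_of_toZMod_ne_zero {w : ℤ_[p]} (hw : toZMod w ≠ 0) : ‖w‖ = 1 :=
  (norm_le_one w).antisymm (not_lt.1 (mt (toZMod_eq_zero_iff_norm_lt_one w).2 hw))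

theorem exists_eval_eq_zero_of_toZMod (F : ℤ_[p][X]) (x₀ : ℤ_[p])
    (h : toZMod (F.eval x₀) = 0) (hd : toZMod (F.derivative.eval x₀) ≠ 0) :
    ∃ x, F.eval x = 0 := by
  obtain ⟨x, hx, -⟩ := hensels_lemma (F := F) (a := x₀) (by
    rw [coe_aeval_eq_eval, norm_eq_one_of_toZMod_ne_zero hd, one_pow]
    exact (toZMod_eq_zero_iff_norm_lt_one _).1 h)
  exact ⟨x, by rwa [coe_aeval_eq_eval] at hx⟩

theorem exists_quadratic_eq_of_toZMod (A B t x₀ : ℤ_[p])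
    (h : toZMod (A * x₀ ^ 2 + B * x₀) = toZMod t) (hd : toZMod (2 * A * x₀ + B) ≠ 0) :
    ∃ x, A * x ^ 2 + B * x = t := by
  obtain ⟨x, hx⟩ := exists_eval_eq_zero_of_toZMod (C A * X ^ 2 + C B * X - C t) x₀
    (by simpa only [eval_sub, eval_add, eval_mul, eval_pow, eval_C, eval_X, map_sub,
      sub_eq_zero] using h)
    (by
      convert hd using 2
      simp only [derivative_sub, derivative_add, derivative_C_mul_X_pow, derivative_C_mul_X,
        derivative_C, eval_sub, eval_add, eval_mul, eval_pow, eval_C, eval_X, eval_zero]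
      ring)
  simp only [eval_sub, eval_add, eval_mul, eval_pow, eval_C, eval_X, sub_eq_zero] at hx
  exact ⟨x, hx⟩

theorem exists_twicePolygonal_add_add_eq (hp : p ≠ 2) (a b c t : ℤ_[p]) :
    ∃ x y z, twicePolygonal a x + twicePolygonal b y + twicePolygonal c z = t := by
  have hchar : ringChar (ZMod p) ≠ 2 := by rwa [ZMod.ringChar_zmod_n]
  have h4 : (4 : ZMod p) ≠ 0 := by
    simpa [show (4 : ZMod p) = 2 * 2 by norm_num] using Ring.two_ne_zero hchar
  obtain ⟨x₀, hx₀⟩ := exists_deriv_twicePolygonal_ne_zero h4 (toZMod a)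
  obtain ⟨x₀, rfl⟩ := ZMod.ringHom_surjective toZMod x₀
  obtain ⟨y₀, z₀, hyz⟩ := FiniteField.exists_twicePolygonal_add_twicePolygonal_eq hchar
    (toZMod b) (toZMod c) (toZMod t - twicePolygonal (toZMod a) (toZMod x₀))
  obtain ⟨y₀, rfl⟩ := ZMod.ringHom_surjective toZMod y₀
  obtain ⟨z₀, rfl⟩ := ZMod.ringHom_surjective toZMod z₀
  obtain ⟨x, hx⟩ := exists_quadratic_eq_of_toZMod (a - 2) (-(a - 4))
    (t - twicePolygonal b y₀ - twicePolygonal c z₀) x₀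
    (by
      simp only [twicePolygonal, map_sub, map_add, map_mul, map_pow, map_neg, map_ofNat] at hyz ⊢
      linear_combination hyz)
    (by simpa [map_ofNat, sub_eq_add_neg, mul_assoc] using hx₀)
  exact ⟨x, y₀, z₀, by simp only [twicePolygonal] at hx ⊢; linear_combination hx⟩

theorem exists_twicePolygonal_eq_two_mul (m : ℤ) (hm : ¬4 ∣ m) (n : ℤ_[2]) :
    ∃ x, twicePolygonal (m : ℤ_[2]) x = 2 * n := by
  have h2 : toZMod (2 : ℤ_[2]) = 0 := by rw [map_ofNat]; decide
  rcases Int.even_or_odd' m with ⟨k, rfl | rfl⟩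
  · obtain ⟨j, rfl⟩ : Odd k := Int.odd_iff.2 (by omega)
    obtain ⟨x, hx⟩ := exists_quadratic_eq_of_toZMod (2 * j) (1 - 2 * j) n n
      (by simp [h2]) (by simp [h2])
    exact ⟨x, by simp only [twicePolygonal]; push_cast; linear_combination 2 * hx⟩
  · obtain ⟨x, hx⟩ := exists_quadratic_eq_of_toZMod (2 * k - 1) (3 - 2 * k) (2 * n) 0
      (by simp [h2]) (by simp [h2, map_ofNat]; decide)
    exact ⟨x, by simp only [twicePolygonal]; push_cast; linear_combination hx⟩

end PadicInt

theorem stmt12_general (a b c : ℤ)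
    (h4 : ¬(4 ∣ a) ∨ ¬(4 ∣ b) ∨ ¬(4 ∣ c))
    (p : ℕ) [Fact p.Prime] :
    (∀ n : ℤ_[p], ∃ x y z : ℤ_[p],
      (((a - 2 : ℤ) : ℤ_[p]) * x ^ 2 - ((a - 4 : ℤ) : ℤ_[p]) * x)
      + (((b - 2 : ℤ) : ℤ_[p]) * y ^ 2 - ((b - 4 : ℤ) : ℤ_[p]) * y)
      + (((c - 2 : ℤ) : ℤ_[p]) * z ^ 2 - ((c - 4 : ℤ) : ℤ_[p]) * z) = 2 * n) ∧
    (∀ n : ℕ, ∃ x y z : ℤ_[p],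
      (((a - 2 : ℤ) : ℤ_[p]) * x ^ 2 - ((a - 4 : ℤ) : ℤ_[p]) * x)
      + (((b - 2 : ℤ) : ℤ_[p]) * y ^ 2 - ((b - 4 : ℤ) : ℤ_[p]) * y)
      + (((c - 2 : ℤ) : ℤ_[p]) * z ^ 2 - ((c - 4 : ℤ) : ℤ_[p]) * z) = 2 * (n : ℤ_[p])) := by
  have key : ∀ n : ℤ_[p], ∃ x y z : ℤ_[p],
      twicePolygonal (a : ℤ_[p]) x + twicePolygonal (b : ℤ_[p]) y + twicePolygonal (c : ℤ_[p]) z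
        = 2 * n := by
    intro n
    rcases eq_or_ne p 2 with rfl | hp
    · rcases h4 with h | h | h
      · obtain ⟨x, hx⟩ := exists_twicePolygonal_eq_two_mul a h n
        exact ⟨x, 0, 0, by simpa [twicePolygonal] using hx⟩
      · obtain ⟨y, hy⟩ := exists_twicePolygonal_eq_two_mul b h n
        exact ⟨0, y, 0, by simpa [twicePolygonal] using hy⟩
      · obtain ⟨z, hz⟩ := exists_twicePolygonal_eq_two_mul c h n
        exact ⟨0, 0, z, by simpa [twicePolygonal] using hz⟩
    · exact exists_twicePolygonal_add_add_eq hp _ _ _ _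
  have hcast (m : ℤ) (x : ℤ_[p]) :
      ((m - 2 : ℤ) : ℤ_[p]) * x ^ 2 - ((m - 4 : ℤ) : ℤ_[p]) * x = twicePolygonal (m : ℤ_[p]) x := by
    push_cast; rfl
  simp only [hcast]
  exact ⟨key, fun n => key n⟩

theorem stmt12 (a b c : ℤ) (ha : 3 ≤ a) (hb : 3 ≤ b) (hc : 3 ≤ c)
    (h4 : ¬(4 ∣ a) ∨ ¬(4 ∣ b) ∨ ¬(4 ∣ c))
    (p : ℕ) [Fact p.Prime] :
    (∀ n : ℤ_[p], ∃ x y z : ℤ_[p],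
      (((a - 2 : ℤ) : ℤ_[p]) * x ^ 2 - ((a - 4 : ℤ) : ℤ_[p]) * x)
      + (((b - 2 : ℤ) : ℤ_[p]) * y ^ 2 - ((b - 4 : ℤ) : ℤ_[p]) * y)
      + (((c - 2 : ℤ) : ℤ_[p]) * z ^ 2 - ((c - 4 : ℤ) : ℤ_[p]) * z) = 2 * n) ∧
    (∀ n : ℕ, ∃ x y z : ℤ_[p],
      (((a - 2 : ℤ) : ℤ_[p]) * x ^ 2 - ((a - 4 : ℤ) : ℤ_[p]) * x)
      + (((b - 2 : ℤ) : ℤ_[p]) * y ^ 2 - ((b - 4 : ℤ) : ℤ_[p]) * y)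
      + (((c - 2 : ℤ) : ℤ_[p]) * z ^ 2 - ((c - 4 : ℤ) : ℤ_[p]) * z) = 2 * (n : ℤ_[p])) :=
  stmt12_general a b c h4 p
end

section
/- Let m ≥ 3 be an integer such that m is odd or m ≡ 2 (mod 4). Then for every n ∈ ℤ_2 (the ring of 2-adic integers) there exists x ∈ ℤ_2 such that (m−2)x² − (m−4)x = 2n; that is, the generalized m-gonal polynomial P_m(x) = ((m−2)x² − (m−4)x)/2 represents every 2-adic integer over ℤ_2. -/
/-!
Write `m = 2k + 1` or `m = 4k + 2`. In the first case the equation is the quadratic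
`(2k - 1) x² - (2k - 3) x = 2n`, which has the root `0` modulo `2` with odd derivative `-(2k - 3)`
there. In the second case we divide by `2` and solve `2k x² - (2k - 1) x = n`, which has the root
`n` modulo `2` with odd derivative `4kn - 2k + 1`. In both cases Hensel's lemma lifts the root.
-/

open Polynomial

namespace PadicInt

variable {p : ℕ} [Fact p.Prime]

theorem not_natCast_dvd_mul_add_one (y : ℤ_[p]) : ¬ (p : ℤ_[p]) ∣ p * y + 1 := fun h =>
  mem_nonunits_iff.mp p_nonunit (isUnit_of_dvd_one ((dvd_add_right (dvd_mul_right _ _)).mp h))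

theorem exists_eval_eq_zero_of_dvd {F : ℤ_[p][X]} {a : ℤ_[p]} (h : (p : ℤ_[p]) ∣ F.eval a)
    (h' : ¬ (p : ℤ_[p]) ∣ F.derivative.eval a) : ∃ z, F.eval z = 0 := by
  have hunit : ‖F.derivative.eval a‖ = 1 :=
    le_antisymm (norm_le_one _) (not_lt.mp fun hlt => h' ((norm_lt_one_iff_dvd _).mp hlt))
  have hnorm : ‖F.aeval a‖ < ‖F.derivative.aeval a‖ ^ 2 := by
    rwa [coe_aeval_eq_eval, hunit, one_pow, norm_lt_one_iff_dvd]
  obtain ⟨z, hz, -⟩ := hensels_lemma hnorm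
  exact ⟨z, by rwa [coe_aeval_eq_eval] at hz⟩

theorem exists_mul_sq_sub_mul_eq {A B D a : ℤ_[p]} (h : (p : ℤ_[p]) ∣ A * a ^ 2 - B * a - D)
    (h' : ¬ (p : ℤ_[p]) ∣ 2 * A * a - B) : ∃ z, A * z ^ 2 - B * z = D := by
  obtain ⟨z, hz⟩ := exists_eval_eq_zero_of_dvd (F := C A * X ^ 2 - C B * X - C D) (a := a)
    (by simpa using h) (by convert h' using 2; simp; ring)
  exact ⟨z, sub_eq_zero.mp (by simpa using hz)⟩

end PadicInt

theorem stmt14_general (m : ℤ) (hcond : Odd m ∨ m % 4 = 2) :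
    ∀ n : ℤ_[2], ∃ x : ℤ_[2],
      ((m - 2 : ℤ) : ℤ_[2]) * x ^ 2 - ((m - 4 : ℤ) : ℤ_[2]) * x = 2 * n := by
  intro n
  rcases hcond with ⟨k, rfl⟩ | hm
  · refine PadicInt.exists_mul_sq_sub_mul_eq (p := 2) (a := 0) ⟨-n, by push_cast; ring⟩ ?_
    convert PadicInt.not_natCast_dvd_mul_add_one (p := 2) (1 - k) using 2
    push_cast
    ring
  · obtain ⟨k, rfl⟩ : ∃ k, m = 4 * k + 2 := ⟨m / 4, by omega⟩
    obtain ⟨z, hz⟩ := PadicInt.exists_mul_sq_sub_mul_eq (p := 2) (A := 2 * k) (B := 2 * k - 1)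
      (D := n) (a := n) ⟨k * n ^ 2 - k * n, by push_cast; ring⟩
      (by
        convert PadicInt.not_natCast_dvd_mul_add_one (p := 2) (2 * k * n - k) using 2
        push_cast
        ring)
    exact ⟨z, by push_cast; linear_combination 2 * hz⟩

theorem stmt14 (m : ℤ) (hm : 3 ≤ m) (hcond : Odd m ∨ m % 4 = 2) :
    ∀ n : ℤ_[2], ∃ x : ℤ_[2],
      ((m - 2 : ℤ) : ℤ_[2]) * x ^ 2 - ((m - 4 : ℤ) : ℤ_[2]) * x = 2 * n :=
  stmt14_general m hcond
end

section
/- Let a, b, c ≥ 3 be integers and let p be an odd prime. If the ternary quadratic form Q(X,Y,Z) = (a−2)X² + (b−2)Y² + (c−2)Z² is anisotropic over ℚ_p (i.e., Q(v) = 0 with v ∈ ℚ_p³ implies v = 0), then there exists a constant C ∈ ℕ such that for every n ∈ ℕ the p-adic valuation of l_n + v_{a,b,c} is at most C. -/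
/-!
With `α = a - 2`, `β = b - 2`, `γ = c - 2` one has
`2 ^ δ * (l_n + v) = αβγ (8n + α + β + γ - 12) + 4 (αβ + βγ + γα)`,
so it suffices that `‖αβγ‖_p < ‖αβ + βγ + γα‖_p`: the `p`-adic valuation of `l_n + v` is then
that of `αβ + βγ + γα`, for every `n`. Dividing by `αβγ`, this says `‖α⁻¹ + β⁻¹ + γ⁻¹‖_p > 1`,
where `⟨α⁻¹, β⁻¹, γ⁻¹⟩` is again anisotropic, now with coefficients of norm `≥ 1`.
If `‖r + s + t‖ ≤ 1` for such a form `⟨r, s, t⟩`, then either all three coefficients are units,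
and the form is isotropic because it has a nontrivial zero mod `p` (counting squares) which
lifts by Hensel's lemma; or some coefficient, say `r`, has norm `> 1 ≥ ‖r + s + t‖`, so that
`-(s + t) / r ≡ 1` is a square by Hensel's lemma and `(x, 1, 1)` is an isotropic vector.
-/

open Polynomial

def IsAnisotropicDiag {K : Type*} [CommRing K] (a b c : K) : Prop :=
  ∀ x y z : K, a * x ^ 2 + b * y ^ 2 + c * z ^ 2 = 0 → x = 0 ∧ y = 0 ∧ z = 0

namespace IsAnisotropicDiag

variable {K : Type*} [Field K] {a b c : K}

theorem ne_zero (h : IsAnisotropicDiag a b c) : a ≠ 0 ∧ b ≠ 0 ∧ c ≠ 0 :=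
  ⟨fun ha => one_ne_zero (h 1 0 0 (by simp [ha])).1,
    fun hb => one_ne_zero (h 0 1 0 (by simp [hb])).2.1,
    fun hc => one_ne_zero (h 0 0 1 (by simp [hc])).2.2⟩

theorem inv (h : IsAnisotropicDiag a b c) : IsAnisotropicDiag a⁻¹ b⁻¹ c⁻¹ := by
  obtain ⟨ha, hb, hc⟩ := h.ne_zero
  have hscale : ∀ {d : K}, d ≠ 0 → ∀ w : K, d * (d⁻¹ * w) ^ 2 = d⁻¹ * w ^ 2 := by
    intro d hd w
    field_simp
  intro x y z hQ
  have := h (a⁻¹ * x) (b⁻¹ * y) (c⁻¹ * z) (by rwa [hscale ha, hscale hb, hscale hc])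
  simpa [ha, hb, hc] using this

end IsAnisotropicDiag

variable {p : ℕ} [Fact p.Prime]

theorem Padic.norm_two_eq_one (hp : p ≠ 2) : ‖(2 : ℚ_[p])‖ = 1 := by
  simpa using Padic.norm_natCast_eq_one_iff.mpr ((Nat.coprime_primes Fact.out Nat.prime_two).mpr hp)

theorem PadicInt.isSquare_of_norm_sub_one_lt (hp : p ≠ 2) {b : ℤ_[p]} (hb : ‖b - 1‖ < 1) :
    IsSquare b := by
  have h2 : ‖(2 : ℤ_[p])‖ = 1 := Padic.norm_two_eq_one hp
  obtain ⟨z, hz, -⟩ := hensels_lemma (p := p) (F := X ^ 2 - C b) (a := 1)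
    (by simpa [h2, norm_sub_rev, one_add_one_eq_two] using hb)
  exact ⟨z, by simpa [sub_eq_zero, sq, eq_comm] using hz⟩

theorem Padic.isSquare_of_norm_sub_one_lt (hp : p ≠ 2) {z : ℚ_[p]} (hz : ‖z - 1‖ < 1) :
    IsSquare z := by
  have hz1 : ‖z‖ ≤ 1 := by
    simpa using (Padic.nonarchimedean (z - 1) 1).trans (max_le hz.le (by simp))
  obtain ⟨w, hw⟩ := PadicInt.isSquare_of_norm_sub_one_lt hp (b := ⟨z, hz1⟩) hz
  exact ⟨w, by simpa using congrArg ((↑) : ℤ_[p] → ℚ_[p]) hw⟩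

theorem Padic.exists_mul_sq_add_eq_zero (hp : p ≠ 2) {u c x₀ : ℚ_[p]}
    (h : ‖u * x₀ ^ 2 + c‖ < ‖u * x₀ ^ 2‖) : ∃ x, u * x ^ 2 + c = 0 := by
  have hd : u * x₀ ^ 2 ≠ 0 := norm_pos_iff.mp ((norm_nonneg _).trans_lt h)
  obtain ⟨w, hw⟩ := Padic.isSquare_of_norm_sub_one_lt hp (z := -c / (u * x₀ ^ 2)) (by
    rw [div_sub_one hd, norm_div, show -c - u * x₀ ^ 2 = -(u * x₀ ^ 2 + c) by ring, norm_neg]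
    exact (div_lt_one (norm_pos_iff.mpr hd)).mpr h)
  refine ⟨x₀ * w, ?_⟩
  have : u * x₀ ^ 2 * (w * w) = -c := by rw [← hw, mul_div_cancel₀ _ hd]
  linear_combination this

theorem PadicInt.toZMod_eq_zero_iff_norm_lt_one_s15 {x : ℤ_[p]} : toZMod x = 0 ↔ ‖x‖ < 1 := by
  rw [← RingHom.mem_ker, ker_toZMod, IsLocalRing.mem_maximalIdeal, mem_nonunits_iff,
    not_isUnit_iff]

theorem PadicInt.exists_isotropic_of_residue (hp : p ≠ 2) {r s t : ℤ_[p]} (hr : ‖r‖ = 1)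
    {ρ σ : ZMod p} (hρ : ρ ≠ 0) (hres : toZMod r * ρ ^ 2 + toZMod s * σ ^ 2 + toZMod t = 0) :
    ∃ x y : ℚ_[p], r * x ^ 2 + s * y ^ 2 + t = 0 := by
  obtain ⟨x₀, rfl⟩ := ZMod.ringHom_surjective toZMod ρ
  obtain ⟨y₀, rfl⟩ := ZMod.ringHom_surjective toZMod σ
  have hx₀ : ‖x₀‖ = 1 :=
    (norm_le_one x₀).lt_or_eq.resolve_left (mt toZMod_eq_zero_iff_norm_lt_one_s15.mpr hρ)
  have hE : ‖r * x₀ ^ 2 + (s * y₀ ^ 2 + t)‖ < ‖r * x₀ ^ 2‖ := by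
    rw [norm_mul, norm_pow, hr, hx₀, one_pow, mul_one, ← toZMod_eq_zero_iff_norm_lt_one_s15]
    simpa [add_assoc] using hres
  obtain ⟨x, hx⟩ := Padic.exists_mul_sq_add_eq_zero hp (x₀ := (x₀ : ℚ_[p]))
    (c := ((s * y₀ ^ 2 + t : ℤ_[p]) : ℚ_[p])) (by exact_mod_cast hE)
  exact ⟨x, y₀, by push_cast at hx; linear_combination hx⟩

theorem PadicInt.exists_isotropic_of_norm_eq_one (hp : p ≠ 2) {r s t : ℤ_[p]} (hr : ‖r‖ = 1)
    (hs : ‖s‖ = 1) (ht : ‖t‖ = 1) : ∃ x y : ℚ_[p], r * x ^ 2 + s * y ^ 2 + t = 0 := by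
  have hne : ∀ {x : ℤ_[p]}, ‖x‖ = 1 → toZMod x ≠ 0 := fun hx => by
    simp [toZMod_eq_zero_iff_norm_lt_one_s15, hx]
  have hcard : Fintype.card (ZMod p) % 2 = 1 := by
    rw [ZMod.card]
    exact Nat.odd_iff.mp ((Fact.out : p.Prime).odd_of_ne_two hp)
  obtain ⟨ρ, σ, hρσ⟩ := FiniteField.exists_root_sum_quadratic
    (f := C (toZMod r) * X ^ 2 + C 0 * X + C (toZMod t))
    (g := C (toZMod s) * X ^ 2 + C 0 * X + C 0)
    (degree_quadratic (hne hr)) (degree_quadratic (hne hs)) hcard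
  simp only [eval_add, eval_mul, eval_pow, eval_C, eval_X, zero_mul, add_zero] at hρσ
  by_cases hρ : ρ = 0
  · have hσ : σ ≠ 0 := by
      rintro rfl
      exact hne ht (by simpa [hρ] using hρσ)
    obtain ⟨y, x, h⟩ := exists_isotropic_of_residue hp hs hσ (s := r) (t := t) (σ := ρ)
      (by linear_combination hρσ)
    exact ⟨x, y, by linear_combination h⟩
  · exact exists_isotropic_of_residue hp hr hρ (s := s) (t := t) (σ := σ)
      (by linear_combination hρσ)

theorem Padic.one_lt_norm_add_of_isAnisotropicDiag (hp : p ≠ 2) {r s t : ℚ_[p]}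
    (hr : 1 ≤ ‖r‖) (hs : 1 ≤ ‖s‖) (ht : 1 ≤ ‖t‖) (h : IsAnisotropicDiag r s t) :
    1 < ‖r + s + t‖ := by
  by_contra! hsum
  by_cases hunit : ‖r‖ = 1 ∧ ‖s‖ = 1 ∧ ‖t‖ = 1
  · obtain ⟨hr1, hs1, ht1⟩ := hunit
    obtain ⟨x, y, hxy⟩ := PadicInt.exists_isotropic_of_norm_eq_one hp
      (r := ⟨r, hr1.le⟩) (s := ⟨s, hs1.le⟩) (t := ⟨t, ht1.le⟩) hr1 hs1 ht1
    exact one_ne_zero (h x y 1 (by simpa using hxy)).2.2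
  have hbig : 1 < ‖r‖ ∨ 1 < ‖s‖ ∨ 1 < ‖t‖ := by
    by_contra! hle
    exact hunit ⟨le_antisymm hle.1 hr, le_antisymm hle.2.1 hs, le_antisymm hle.2.2 ht⟩
  rcases hbig with hr' | hs' | ht'
  · obtain ⟨x, hx⟩ := exists_mul_sq_add_eq_zero hp (u := r) (c := s + t) (x₀ := 1)
      (by simpa [add_assoc] using hsum.trans_lt hr')
    exact one_ne_zero (h x 1 1 (by linear_combination hx)).2.1
  · obtain ⟨y, hy⟩ := exists_mul_sq_add_eq_zero hp (u := s) (c := r + t) (x₀ := 1)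
      (by simpa [add_comm, add_left_comm] using hsum.trans_lt hs')
    exact one_ne_zero (h 1 y 1 (by linear_combination hy)).1
  · obtain ⟨z, hz⟩ := exists_mul_sq_add_eq_zero hp (u := t) (c := r + s) (x₀ := 1)
      (by simpa [add_comm] using hsum.trans_lt ht')
    exact one_ne_zero (h 1 1 z (by linear_combination hz)).1

theorem Padic.norm_mul_mul_lt_norm_add_of_isAnisotropicDiag (hp : p ≠ 2) {α β γ : ℚ_[p]}
    (hα : ‖α‖ ≤ 1) (hβ : ‖β‖ ≤ 1) (hγ : ‖γ‖ ≤ 1) (h : IsAnisotropicDiag α β γ) :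
    ‖α * β * γ‖ < ‖α * β + β * γ + γ * α‖ := by
  obtain ⟨hα0, hβ0, hγ0⟩ := h.ne_zero
  have hinv : ∀ {d : ℚ_[p]}, d ≠ 0 → ‖d‖ ≤ 1 → 1 ≤ ‖d⁻¹‖ := fun hd hd1 => by
    rw [norm_inv]; exact one_le_inv₀ (norm_pos_iff.mpr hd) |>.mpr hd1
  have hsum := one_lt_norm_add_of_isAnisotropicDiag hp (hinv hα0 hα) (hinv hβ0 hβ)
    (hinv hγ0 hγ) h.inv
  rw [show α * β + β * γ + γ * α = α * β * γ * (α⁻¹ + β⁻¹ + γ⁻¹) by field_simp; ring,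
    norm_mul _ (α⁻¹ + β⁻¹ + γ⁻¹)]
  exact lt_mul_of_one_lt_right (norm_pos_iff.mpr (mul_ne_zero (mul_ne_zero hα0 hβ0) hγ0)) hsum

theorem Padic.norm_mul_add_mul_eq {N S m e : ℚ_[p]} (hNS : ‖N‖ < ‖S‖) (hm : ‖m‖ ≤ 1)
    (he : ‖e‖ = 1) : ‖N * m + e * S‖ = ‖S‖ := by
  have hlt : ‖N * m‖ < ‖e * S‖ := by
    rw [norm_mul, norm_mul, he, one_mul]
    exact (mul_le_of_le_one_right (norm_nonneg _) hm).trans_lt hNS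
  rw [Padic.add_eq_max_of_ne hlt.ne, max_eq_right hlt.le, norm_mul, he, one_mul]

theorem padicValInt_eq_of_norm_eq {x y : ℤ} (h : ‖(x : ℚ_[p])‖ = ‖(y : ℚ_[p])‖) :
    padicValInt p x = padicValInt p y := by
  rcases eq_or_ne x 0 with rfl | hx
  · have : y = 0 := by simpa [eq_comm] using h
    simp [this]
  have hy : y ≠ 0 := by rintro rfl; simp_all
  rw [Padic.norm_eq_zpow_neg_valuation (by exact_mod_cast hx),
    Padic.norm_eq_zpow_neg_valuation (by exact_mod_cast hy),
    zpow_right_inj₀ (by exact_mod_cast (Fact.out : p.Prime).pos)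
      (by exact_mod_cast (Fact.out : p.Prime).ne_one), neg_inj,
    Padic.valuation_intCast, Padic.valuation_intCast] at h
  exact_mod_cast h

theorem stmt15_general (a b c : ℤ)
    (p : ℕ) [Fact p.Prime] (hodd : Odd p)
    (haniso : ∀ X Y Z : ℚ_[p],
      ((a - 2 : ℤ) : ℚ_[p]) * X ^ 2 + ((b - 2 : ℤ) : ℚ_[p]) * Y ^ 2
        + ((c - 2 : ℤ) : ℚ_[p]) * Z ^ 2 = 0 → X = 0 ∧ Y = 0 ∧ Z = 0) :
    ∀ δ : ℕ, δ = (if 2 ∣ a ∧ 2 ∣ b ∧ 2 ∣ c then 2 else 0) →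
    ∀ v : ℤ, v = ((a - 4) ^ 2 * (b - 2) * (c - 2) + (a - 2) * (b - 4) ^ 2 * (c - 2)
      + (a - 2) * (b - 2) * (c - 4) ^ 2) / 2 ^ δ →
    ∃ C : ℕ, ∀ n : ℕ,
      padicValInt p (2 ^ (3 - δ) * ((a - 2) * (b - 2) * (c - 2)) * (n : ℤ) + v) ≤ C := by
  intro δ hδ v hv
  set N := (a - 2) * (b - 2) * (c - 2)
  set S := (a - 2) * (b - 2) + (b - 2) * (c - 2) + (c - 2) * (a - 2)
  have hp : p ≠ 2 := hodd.ne_two_of_dvd_nat dvd_rfl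
  have hNS : ‖(N : ℚ_[p])‖ < ‖(S : ℚ_[p])‖ := by
    simpa [N, S] using Padic.norm_mul_mul_lt_norm_add_of_isAnisotropicDiag hp
      (Padic.norm_int_le_one _) (Padic.norm_int_le_one _) (Padic.norm_int_le_one _) haniso
  have hw : 2 ^ δ * v = N * (a + b + c - 18) + 4 * S := by
    rw [hv, show (a - 4) ^ 2 * (b - 2) * (c - 2) + (a - 2) * (b - 4) ^ 2 * (c - 2)
      + (a - 2) * (b - 2) * (c - 4) ^ 2 = N * (a + b + c - 18) + 4 * S by ring]
    refine Int.mul_ediv_cancel' ?_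
    split_ifs at hδ with h2
    · obtain ⟨⟨a', rfl⟩, ⟨b', rfl⟩, -⟩ := h2
      exact hδ ▸ ⟨(a' - 1) * (b' - 1) * (c - 2) * (2 * a' + 2 * b' + c - 18) + S, by ring⟩
    · simp [hδ]
  have hδ2 : δ ≤ 2 := by split_ifs at hδ <;> omega
  refine ⟨padicValInt p S, fun n => (padicValInt_eq_of_norm_eq ?_).le⟩
  have hx : 2 ^ δ * (2 ^ (3 - δ) * N * n + v) = N * (8 * n + a + b + c - 18) + 4 * S := by
    rw [mul_add, hw, ← mul_assoc, ← mul_assoc, ← pow_add, Nat.add_sub_cancel' (by omega)]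
    ring
  have h2 := Padic.norm_two_eq_one hp
  have hnorm := congrArg (fun z : ℤ => ‖(z : ℚ_[p])‖) hx
  push_cast at hnorm
  have h4 : ‖(4 : ℚ_[p])‖ = 1 := by rw [show (4 : ℚ_[p]) = 2 ^ 2 by norm_num, norm_pow, h2, one_pow]
  have hm : ‖((8 * n + a + b + c - 18 : ℤ) : ℚ_[p])‖ ≤ 1 := Padic.norm_int_le_one _
  push_cast at hm ⊢
  rwa [norm_mul, norm_pow, h2, one_pow, one_mul, Padic.norm_mul_add_mul_eq hNS hm h4] at hnorm

theorem stmt15 (a b c : ℤ) (ha : 3 ≤ a) (hb : 3 ≤ b) (hc : 3 ≤ c)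
    (p : ℕ) [Fact p.Prime] (hodd : Odd p)
    (haniso : ∀ X Y Z : ℚ_[p],
      ((a - 2 : ℤ) : ℚ_[p]) * X ^ 2 + ((b - 2 : ℤ) : ℚ_[p]) * Y ^ 2
        + ((c - 2 : ℤ) : ℚ_[p]) * Z ^ 2 = 0 → X = 0 ∧ Y = 0 ∧ Z = 0) :
    ∀ δ : ℕ, δ = (if 2 ∣ a ∧ 2 ∣ b ∧ 2 ∣ c then 2 else 0) →
    ∀ v : ℤ, v = ((a - 4) ^ 2 * (b - 2) * (c - 2) + (a - 2) * (b - 4) ^ 2 * (c - 2)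
      + (a - 2) * (b - 2) * (c - 4) ^ 2) / 2 ^ δ →
    ∃ C : ℕ, ∀ n : ℕ,
      padicValInt p (2 ^ (3 - δ) * ((a - 2) * (b - 2) * (c - 2)) * (n : ℤ) + v) ≤ C :=
  stmt15_general a b c p hodd haniso
end

section
/- Let a, b, c ≥ 3 be integers such that at least one of a, b, c is not divisible by 4. Then either the ternary quadratic form Q(X,Y,Z) = (a−2)X² + (b−2)Y² + (c−2)Z² is isotropic over ℚ_2 (i.e., there is a nonzero v ∈ ℚ_2³ with Q(v) = 0), or there exists a constant C ∈ ℕ such that for every n ∈ ℕ the 2-adic valuation of l_n + v_{a,b,c} is at most C. -/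
/-! Write `α = a - 2`, `β = b - 2`, `γ = c - 2`, `P = αβγ = 2ᴷ m` with `m` odd, and
`N = (α-2)²βγ + α(β-2)²γ + αβ(γ-2)²`, so that `v = N / 2^δ` and `lₙ = 2^(3-δ) P n`.

If `2^(K+3) ∤ N` then `2^(K+3-δ)` divides `lₙ` but not `v`, which bounds `v₂(lₙ + v)`.
If `2^(K+3) ∣ N`, the integer vector `(βγ(α-2), αγ(β-2), αβ(γ-2))` has
`Q = P N ≡ 0 mod 2^(2K+3)`. Freeing the first coordinate, `-α(βy² + γz²)` is then
a power of `4` times a number `≡ 1 mod 8`, provided `α ≢ 2 mod 4` (i.e. `4 ∤ a`); such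
numbers are squares in `ℤ_[2]` by Hensel's lemma, so `αX² = -(βy² + γz²)` has a solution
`X ≠ 0`. -/

open Polynomial in
theorem PadicInt.isSquare_of_norm_sub_one_lt_s16 {u : ℤ_[2]} (hu : ‖u - 1‖ < 4⁻¹) :
    IsSquare u := by
  have hF : aeval (1 : ℤ_[2]) (X ^ 2 - C u) = -(u - 1) := by simp
  have hF' : aeval (1 : ℤ_[2]) (derivative (X ^ 2 - C u)) = 2 := by simp [one_add_one_eq_two]
  have h2 : ‖(2 : ℤ_[2])‖ = 2⁻¹ := by simpa using PadicInt.norm_p (p := 2)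
  obtain ⟨z, hz, -⟩ := hensels_lemma (F := X ^ 2 - C u) (a := 1)
    (by rw [hF, hF', norm_neg, h2]; linarith)
  exact ⟨z, by simpa [sub_eq_zero, sq, eq_comm] using hz⟩

theorem Padic.isSquare_intCast_of_emod_eight_eq_one {u : ℤ} (hu : u % 8 = 1) :
    IsSquare (u : ℚ_[2]) := by
  have h8 : ‖((u - 1 : ℤ) : ℤ_[2])‖ ≤ (2 : ℝ) ^ (-(3 : ℕ) : ℤ) :=
    PadicInt.norm_int_le_pow_iff_dvd.2 (by omega)
  have hsq : IsSquare (u : ℤ_[2]) :=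
    PadicInt.isSquare_of_norm_sub_one_lt_s16 (by push_cast at h8; norm_num at h8 ⊢; linarith)
  simpa using hsq.map PadicInt.Coe.ringHom

theorem Int.exists_eq_two_pow_mul_odd {n : ℤ} (hn : n ≠ 0) :
    ∃ k : ℕ, ∃ m : ℤ, Odd m ∧ n = 2 ^ k * m := by
  obtain ⟨m, hm, hodd⟩ := (Int.finiteMultiplicity_iff.2 ⟨by decide, hn⟩ :
    FiniteMultiplicity (2 : ℤ) n).exists_eq_pow_mul_and_not_dvd
  exact ⟨_, m, Int.not_even_iff_odd.1 (by rwa [even_iff_two_dvd]), hm⟩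

theorem padicValInt_add_lt_of_dvd_of_not_dvd {p k : ℕ} [Fact p.Prime] {x y : ℤ}
    (hx : (p : ℤ) ^ k ∣ x) (hy : ¬(p : ℤ) ^ k ∣ y) : padicValInt p (x + y) < k := by
  have hxy : ¬(p : ℤ) ^ k ∣ x + y := fun h => hy ((dvd_add_right hx).1 h)
  rw [padicValInt_dvd_iff] at hxy
  omega

theorem Padic.exists_ne_zero_mul_sq_add_eq_zero {α r x w : ℤ} {j : ℕ} (hα : α ≠ 0)
    (hw : Odd w) (hx : α * x = 2 ^ j * w) (hdvd : 2 ^ (2 * j + 3) ∣ α * (α * x ^ 2 + r)) :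
    ∃ X : ℚ_[2], X ≠ 0 ∧ (α : ℚ_[2]) * X ^ 2 + r = 0 := by
  obtain ⟨t, ht⟩ := hdvd
  have hu : (w ^ 2 - 8 * t) % 8 = 1 := by
    obtain ⟨k, rfl⟩ := hw
    obtain ⟨l, hl⟩ := Int.even_mul_succ_self k
    have : (2 * k + 1) ^ 2 - 8 * t = 8 * (l - t) + 1 := by linear_combination 4 * hl
    omega
  have hαr : α * r = -(2 ^ (2 * j) * (w ^ 2 - 8 * t)) := by
    linear_combination ht - (α * x + 2 ^ j * w) * hx
  obtain ⟨s, hs⟩ := Padic.isSquare_intCast_of_emod_eight_eq_one hu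
  have hs0 : s ≠ 0 := by
    rintro rfl
    exact absurd (by exact_mod_cast hs : w ^ 2 - 8 * t = 0) (by omega)
  have hαQ : (α : ℚ_[2]) ≠ 0 := Int.cast_ne_zero.2 hα
  refine ⟨2 ^ j * s / α, by simp [hs0, hαQ], ?_⟩
  have hαrQ : (α : ℚ_[2]) * r = -(2 ^ (2 * j) * (s * s)) := by
    rw [← hs]; exact_mod_cast hαr
  field_simp
  linear_combination hαrQ

theorem isotropic_of_first_emod_four_ne_two {α β γ : ℤ} {K : ℕ} {m : ℤ} (hα : α % 4 ≠ 2)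
    (hm : Odd m) (hP : α * β * γ = 2 ^ K * m)
    (hN : 2 ^ (K + 3) ∣ (α - 2) ^ 2 * β * γ + α * (β - 2) ^ 2 * γ + α * β * (γ - 2) ^ 2) :
    ∃ X Y Z : ℚ_[2], ¬(X = 0 ∧ Y = 0 ∧ Z = 0) ∧
      (α : ℚ_[2]) * X ^ 2 + β * Y ^ 2 + γ * Z ^ 2 = 0 := by
  have hα0 : α ≠ 0 := by
    rintro rfl
    have hm0 : m ≠ 0 := by rintro rfl; simp at hm
    simp [hm0] at hP
  -- `e = v₂(α - 2)`, and `α ≢ 2 mod 4` is exactly what gives `v₂(α) ≥ 2e`.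
  obtain ⟨e, w, hw, hα2, he⟩ : ∃ e : ℕ, ∃ w : ℤ, Odd w ∧ α - 2 = 2 ^ e * w ∧ 2 ^ (2 * e) ∣ α := by
    rcases Int.emod_two_eq_zero_or_one α with h | h
    · exact ⟨1, α / 2 - 1, ⟨α / 4 - 1, by omega⟩, by omega, by omega⟩
    · exact ⟨0, α - 2, ⟨α / 2 - 1, by omega⟩, by ring, by simp⟩
  have hdvd : 2 ^ (2 * (K + e) + 3) ∣ α * (α * (β * γ * (α - 2)) ^ 2
      + (β * (α * γ * (β - 2)) ^ 2 + γ * (α * β * (γ - 2)) ^ 2)) := by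
    have hQ : α * (α * (β * γ * (α - 2)) ^ 2
        + (β * (α * γ * (β - 2)) ^ 2 + γ * (α * β * (γ - 2)) ^ 2))
        = α * (2 ^ K * m) * ((α - 2) ^ 2 * β * γ + α * (β - 2) ^ 2 * γ + α * β * (γ - 2) ^ 2) := by
      rw [← hP]; ring
    rw [hQ, show 2 * (K + e) + 3 = 2 * e + K + (K + 3) by ring, pow_add, pow_add]
    exact mul_dvd_mul (mul_dvd_mul he (dvd_mul_right _ _)) hN
  obtain ⟨X, hX, hXeq⟩ := Padic.exists_ne_zero_mul_sq_add_eq_zero hα0 (hm.mul hw)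
    (by linear_combination (α - 2) * hP + 2 ^ K * m * hα2) hdvd
  refine ⟨X, (α * γ * (β - 2) : ℤ), (α * β * (γ - 2) : ℤ), fun h => hX h.1, ?_⟩
  push_cast at hXeq ⊢
  linear_combination hXeq

theorem isotropic_of_emod_four_ne_two {α β γ : ℤ} {K : ℕ} {m : ℤ}
    (h4 : α % 4 ≠ 2 ∨ β % 4 ≠ 2 ∨ γ % 4 ≠ 2) (hm : Odd m) (hP : α * β * γ = 2 ^ K * m)
    (hN : 2 ^ (K + 3) ∣ (α - 2) ^ 2 * β * γ + α * (β - 2) ^ 2 * γ + α * β * (γ - 2) ^ 2) :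
    ∃ X Y Z : ℚ_[2], ¬(X = 0 ∧ Y = 0 ∧ Z = 0) ∧
      (α : ℚ_[2]) * X ^ 2 + β * Y ^ 2 + γ * Z ^ 2 = 0 := by
  rcases h4 with h | h | h
  · exact isotropic_of_first_emod_four_ne_two h hm hP hN
  · obtain ⟨Y, X, Z, h0, h⟩ := isotropic_of_first_emod_four_ne_two (β := α) (γ := γ) h hm
      (by rw [← hP]; ring) (by convert hN using 1; ring)
    exact ⟨X, Y, Z, by tauto, by linear_combination h⟩
  · obtain ⟨Z, Y, X, h0, h⟩ := isotropic_of_first_emod_four_ne_two (β := β) (γ := α) h hm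
      (by rw [← hP]; ring) (by convert hN using 1; ring)
    exact ⟨X, Y, Z, by tauto, by linear_combination h⟩

theorem stmt16 (a b c : ℤ) (ha : 3 ≤ a) (hb : 3 ≤ b) (hc : 3 ≤ c)
    (h4 : ¬(4 ∣ a) ∨ ¬(4 ∣ b) ∨ ¬(4 ∣ c)) :
    ∀ δ : ℕ, δ = (if 2 ∣ a ∧ 2 ∣ b ∧ 2 ∣ c then 2 else 0) →
    ∀ v : ℤ, v = ((a - 4) ^ 2 * (b - 2) * (c - 2) + (a - 2) * (b - 4) ^ 2 * (c - 2)
      + (a - 2) * (b - 2) * (c - 4) ^ 2) / 2 ^ δ →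
    (∃ X Y Z : ℚ_[2], ¬(X = 0 ∧ Y = 0 ∧ Z = 0) ∧
      ((a - 2 : ℤ) : ℚ_[2]) * X ^ 2 + ((b - 2 : ℤ) : ℚ_[2]) * Y ^ 2
        + ((c - 2 : ℤ) : ℚ_[2]) * Z ^ 2 = 0) ∨
    (∃ C : ℕ, ∀ n : ℕ,
      padicValInt 2 (2 ^ (3 - δ) * ((a - 2) * (b - 2) * (c - 2)) * (n : ℤ) + v) ≤ C) := by
  intro δ hδ v hv
  set N := (a - 4) ^ 2 * (b - 2) * (c - 2) + (a - 2) * (b - 4) ^ 2 * (c - 2)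
    + (a - 2) * (b - 2) * (c - 4) ^ 2
  obtain ⟨K, m, hm, hP⟩ := Int.exists_eq_two_pow_mul_odd (n := (a - 2) * (b - 2) * (c - 2))
    (mul_ne_zero (mul_ne_zero (by omega) (by omega)) (by omega))
  have hδ3 : δ ≤ 3 := by split_ifs at hδ <;> omega
  have hvN : 2 ^ δ * v = N := by
    rw [hv]
    refine Int.mul_ediv_cancel' ?_
    split_ifs at hδ with h
    · obtain ⟨⟨a', rfl⟩, ⟨b', rfl⟩, ⟨c', rfl⟩⟩ := h
      subst hδ
      exact ⟨4 * ((a' - 2) ^ 2 * (b' - 1) * (c' - 1) + (a' - 1) * (b' - 2) ^ 2 * (c' - 1)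
        + (a' - 1) * (b' - 1) * (c' - 2) ^ 2), by ring⟩
    · simp [hδ]
  by_cases hdvd : 2 ^ (K + 3) ∣ N
  · left
    exact isotropic_of_emod_four_ne_two (by omega) hm hP (by convert hdvd using 1; ring)
  · right
    refine ⟨K + 3, fun n => ?_⟩
    have hlt := padicValInt_add_lt_of_dvd_of_not_dvd (p := 2) (k := 3 - δ + K)
      (x := 2 ^ (3 - δ) * ((a - 2) * (b - 2) * (c - 2)) * (n : ℤ)) (y := v)
      ⟨m * n, by rw [hP]; ring⟩
      (fun h => hdvd (by
        rw [← hvN, show K + 3 = δ + (3 - δ + K) by omega, pow_add]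
        exact mul_dvd_mul_left _ (by exact_mod_cast h)))
    omega
end

section
/- Let a, b, c ≥ 3 be integers and s ∈ {0, 1} with a ≡ b ≡ c ≡ 4s (mod 8). Then the set of residues modulo 8 attained by P_a(x) + P_b(y) + P_c(z) as x, y, z range over ℤ has fewer than 8 elements; consequently F_{a,b,c} is not almost universal. -/
/-- The generalized `m`-gonal number `P_m(x) = ((m-2)x^2 - (m-4)x)/2`
(the numerator is always even, so integer division is exact). -/
def gP (m x : ℤ) : ℤ := ((m - 2) * x ^ 2 - (m - 4) * x) / 2

lemma gP_eq (a x : ℤ) : gP a x = (a - 4) * (x * (x - 1) / 2) + x ^ 2 := by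
  obtain ⟨k, hk⟩ : ∃ k, x * (x - 1) = 2 * k := by
    obtain ⟨k, hk⟩ := Int.even_mul_succ_self (x - 1)
    exact ⟨k, by linarith [hk]⟩
  have h2 : (a - 2) * x ^ 2 - (a - 4) * x = 2 * ((a - 4) * k + x ^ 2) := by
    linear_combination (a - 4) * hk
  rw [gP, h2, hk, Int.mul_ediv_cancel_left _ two_ne_zero,
    Int.mul_ediv_cancel_left _ two_ne_zero]

lemma gP_cast (a a' x : ℤ) (h : a ≡ a' [ZMOD 8]) :
    ((gP a x : ℤ) : ZMod 8) = ((gP a' x : ℤ) : ZMod 8) := by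
  have ha : ((a : ℤ) : ZMod 8) = ((a' : ℤ) : ZMod 8) := by
    have := (ZMod.intCast_eq_intCast_iff' a a' 8).2
    simpa using this h
  rw [gP_eq a x, gP_eq a' x]
  push_cast
  rw [ha]

lemma gP4 (x : ℤ) : ((gP 4 x : ℤ) : ZMod 8) = (x : ZMod 8) ^ 2 := by
  rw [gP_eq]; push_cast; ring

lemma gP8 (x : ℤ) : ((gP 8 x : ℤ) : ZMod 8) = 3 * (x : ZMod 8) ^ 2 - 2 * (x : ZMod 8) := by
  obtain ⟨k, hk⟩ : ∃ k, x * (x - 1) = 2 * k := by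
    obtain ⟨k, hk⟩ := Int.even_mul_succ_self (x - 1)
    exact ⟨k, by linarith [hk]⟩
  have : gP 8 x = 3 * x ^ 2 - 2 * x := by
    rw [gP_eq, hk, Int.mul_ediv_cancel_left _ two_ne_zero]
    linear_combination (-2) * hk
  rw [this]; push_cast; ring

lemma conclude (a b c : ℤ) (r : ZMod 8) (rn : ℕ) (hrn : ((rn : ℕ) : ZMod 8) = r)
    (hrpos : 0 < rn)
    (hne : ∀ x y z : ℤ, ((gP a x + gP b y + gP c z : ℤ) : ZMod 8) ≠ r) :
    {w : ZMod 8 | ∃ x y z : ℤ, ((gP a x + gP b y + gP c z : ℤ) : ZMod 8) = w}.ncard < 8 ∧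
    {n : ℕ | 0 < n ∧ ¬∃ x y z : ℤ, gP a x + gP b y + gP c z = (n : ℤ)}.Infinite := by
  constructor
  · have hsub : {w : ZMod 8 | ∃ x y z : ℤ, ((gP a x + gP b y + gP c z : ℤ) : ZMod 8) = w}
        ⊆ ({r}ᶜ : Set (ZMod 8)) := by
      rintro w ⟨x, y, z, hxyz⟩
      simp only [Set.mem_compl_iff, Set.mem_singleton_iff]
      rintro rfl
      exact hne x y z hxyz
    have h1 : {w : ZMod 8 | ∃ x y z : ℤ, ((gP a x + gP b y + gP c z : ℤ) : ZMod 8) = w}.ncard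
        ≤ ({r}ᶜ : Set (ZMod 8)).ncard := Set.ncard_le_ncard hsub (Set.toFinite _)
    have h2 := Set.ncard_add_ncard_compl ({r} : Set (ZMod 8))
    rw [Set.ncard_singleton, Nat.card_zmod] at h2
    omega
  · apply Set.infinite_of_injective_forall_mem (f := fun k : ℕ => 8 * k + rn)
    · intro k1 k2 h
      simp only at h
      omega
    · intro k
      refine ⟨by omega, ?_⟩
      rintro ⟨x, y, z, hxyz⟩
      apply hne x y z
      rw [hxyz, ← hrn]
      push_cast
      have : ((8 : ZMod 8)) = 0 := by decide
      rw [this]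
      ring

theorem stmt17 (a b c : ℤ) (ha : 3 ≤ a) (hb : 3 ≤ b) (hc : 3 ≤ c)
    (s : ℤ) (hs : s = 0 ∨ s = 1)
    (hma : a ≡ 4 * s [ZMOD 8]) (hmb : b ≡ 4 * s [ZMOD 8]) (hmc : c ≡ 4 * s [ZMOD 8]) :
    {w : ZMod 8 | ∃ x y z : ℤ, ((gP a x + gP b y + gP c z : ℤ) : ZMod 8) = w}.ncard < 8 ∧
    {n : ℕ | 0 < n ∧ ¬∃ x y z : ℤ, gP a x + gP b y + gP c z = (n : ℤ)}.Infinite := by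
  rcases hs with rfl | rfl
  · -- s = 0 : a ≡ 0 ≡ 8 (mod 8)
    have h8 : (4 * (0 : ℤ)) ≡ 8 [ZMOD 8] := by decide
    have hma' := hma.trans h8
    have hmb' := hmb.trans h8
    have hmc' := hmc.trans h8
    apply conclude a b c 4 4 (by decide) (by norm_num)
    intro x y z
    push_cast
    rw [gP_cast a 8 x hma', gP_cast b 8 y hmb', gP_cast c 8 z hmc', gP8, gP8, gP8]
    have key : ∀ u v w : ZMod 8,
        3 * u ^ 2 - 2 * u + (3 * v ^ 2 - 2 * v) + (3 * w ^ 2 - 2 * w) ≠ 4 := by decide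
    exact key _ _ _
  · -- s = 1 : a ≡ 4 (mod 8)
    have h4 : (4 * (1 : ℤ)) ≡ 4 [ZMOD 8] := by decide
    have hma' := hma.trans h4
    have hmb' := hmb.trans h4
    have hmc' := hmc.trans h4
    apply conclude a b c 7 7 (by decide) (by norm_num)
    intro x y z
    push_cast
    rw [gP_cast a 4 x hma', gP_cast b 4 y hmb', gP_cast c 4 z hmc', gP4, gP4, gP4]
    have key : ∀ u v w : ZMod 8, u ^ 2 + v ^ 2 + w ^ 2 ≠ 7 := by decide
    exact key _ _ _
end
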